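/- Every standard nonexpansive simple, properly ordered Bratteli-Vershik system is nonexpansive. -/

import Mathlib

set_option autoImplicit false

/-- An ordered Bratteli diagram: finite nonempty vertex sets `V n`, a single root
vertex at level `0`, finite edge sets `E n` (edges from level `n` to level `n+1`,
multiple edges allowed), every vertex has an outgoing edge, every non-root vertex
an incoming edge, and the edges into each vertex carry a linear order, encoded by
the relation `elt` which relates only edges with the same target. -/
structure BDiagram where
  V : ℕ → Type
  E : ℕ → Type
  fintV : ∀ n, Fintype (V n)
  fintE : ∀ n, Fintype (E n)
  nonV : ∀ n, Nonempty (V n)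
  rootSubsingleton : Subsingleton (V 0)
  src : ∀ {n}, E n → V n
  tgt : ∀ {n}, E n → V (n + 1)
  hasOut : ∀ (n : ℕ) (v : V n), ∃ e : E n, src e = v
  hasIn : ∀ (n : ℕ) (v : V (n + 1)), ∃ e : E n, tgt e = v
  elt : ∀ {n}, E n → E n → Prop
  elt_tgt : ∀ (n : ℕ) (e f : E n), elt e f → tgt e = tgt f
  elt_irrefl : ∀ (n : ℕ) (e : E n), ¬ elt e e
  elt_trans : ∀ (n : ℕ) (e f g : E n), elt e f → elt f g → elt e g
  elt_total : ∀ (n : ℕ) (e f : E n), tgt e = tgt f → e ≠ f → elt e f ∨ elt f e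

namespace BDiagram

variable (B : BDiagram)

def castV {m n : ℕ} (h : m = n) (v : B.V m) : B.V n := h ▸ v

/-- An edge is minimal if no edge (into the same target) is below it. -/
def IsMinEdge {n : ℕ} (e : B.E n) : Prop := ∀ e' : B.E n, ¬ B.elt e' e

/-- An edge is maximal if no edge (into the same target) is above it. -/
def IsMaxEdge {n : ℕ} (e : B.E n) : Prop := ∀ e' : B.E n, ¬ B.elt e e'

/-- The space of infinite paths from the root. -/
def PathSpace : Type := { x : ∀ n, B.E n // ∀ n, B.tgt (x n) = B.src (x (n + 1)) }

def IsMinPath (x : B.PathSpace) : Prop := ∀ n, B.IsMinEdge (x.1 n)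

def IsMaxPath (x : B.PathSpace) : Prop := ∀ n, B.IsMaxEdge (x.1 n)

/-- Properly ordered: unique minimal and unique maximal path. -/
def ProperlyOrdered : Prop :=
  (∃! x : B.PathSpace, B.IsMinPath x) ∧ (∃! x : B.PathSpace, B.IsMaxPath x)

/-- The partial order on cofinal paths: `x < y` iff they eventually agree and at the
last disagreement the edge of `x` is below the edge of `y`. -/
def pathLT (x y : B.PathSpace) : Prop :=
  ∃ N : ℕ, B.elt (x.1 N) (y.1 N) ∧ ∀ n : ℕ, N < n → x.1 n = y.1 n

/-- `T` is the Vershik map: each non-maximal path goes to its successor, and each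
maximal path goes to a minimal path. -/
def IsVershik (T : B.PathSpace ≃ B.PathSpace) : Prop :=
  (∀ x : B.PathSpace, ¬ B.IsMaxPath x →
    B.pathLT x (T x) ∧ ∀ z : B.PathSpace, B.pathLT x z → ¬ B.pathLT z (T x)) ∧
  (∀ x : B.PathSpace, B.IsMaxPath x → B.IsMinPath (T x))

/-- `f` is a chain of consecutive edges on levels `[a, b)`. -/
def SegOn (f : ∀ i, B.E i) (a b : ℕ) : Prop :=
  ∀ i : ℕ, a ≤ i → i + 1 < b → B.tgt (f i) = B.src (f (i + 1))

/-- Simplicity: some telescoping has complete connections between adjacent levels. -/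
def Simple : Prop :=
  ∃ ns : ℕ → ℕ, StrictMono ns ∧ ns 0 = 0 ∧
    ∀ (l c : ℕ), ns (l + 1) = c + 1 →
      ∀ (v : B.V (ns l)) (w : B.V (c + 1)),
        ∃ f : ∀ i, B.E i, B.SegOn f (ns l) (c + 1) ∧ B.src (f (ns l)) = v ∧ B.tgt (f c) = w

/-- The natural (Cantor) topology on the path space, induced from the product of
the discrete topologies on the edge sets. -/
def pathTop : TopologicalSpace B.PathSpace :=
  TopologicalSpace.induced Subtype.val (@Pi.topologicalSpace ℕ B.E (fun _ => ⊥))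

/-- Integer iterates of a bijection of the path space. -/
def iterZ (T : B.PathSpace ≃ B.PathSpace) (m : ℤ) : B.PathSpace ≃ B.PathSpace :=
  (T : Equiv.Perm B.PathSpace) ^ m

/-- Two paths have the same `k`-coding: for every time `m` the initial segments of
`T^m x` and `T^m y` from the root to level `k` coincide. -/
def SameCoding (T : B.PathSpace ≃ B.PathSpace) (k : ℕ) (x y : B.PathSpace) : Prop :=
  ∀ (m : ℤ) (i : ℕ), i < k → ((B.iterZ T m) x).1 i = ((B.iterZ T m) y).1 i

/-- A depth `k` pair: distinct paths with the same `k`-coding but not the same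
`(k+1)`-coding. -/
def DepthPair (T : B.PathSpace ≃ B.PathSpace) (k : ℕ) (x y : B.PathSpace) : Prop :=
  x ≠ y ∧ B.SameCoding T k x y ∧ ¬ B.SameCoding T (k + 1) x y

/-- The pair `x, y` has a `j` cut: for some time `m`, both `T^m x` and `T^m y` are
minimal from the root into level `j`. -/
def HasCut (T : B.PathSpace ≃ B.PathSpace) (j : ℕ) (x y : B.PathSpace) : Prop :=
  ∃ m : ℤ, (∀ i : ℕ, i < j → B.IsMinEdge (((B.iterZ T m) x).1 i)) ∧
    (∀ i : ℕ, i < j → B.IsMinEdge (((B.iterZ T m) y).1 i))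

/-- Nonexpansive: for every `k ≥ 1` there are two distinct paths with the same
`k`-coding. -/
def Nonexpansive (T : B.PathSpace ≃ B.PathSpace) : Prop :=
  ∀ k : ℕ, 1 ≤ k → ∃ x y : B.PathSpace, x ≠ y ∧ B.SameCoding T k x y

/-- Well timed: for every `k ≥ 1` and every `j > k` there is a depth `k` pair with
a `j` cut. -/
def WellTimed (T : B.PathSpace ≃ B.PathSpace) : Prop :=
  ∀ k : ℕ, 1 ≤ k → ∀ j : ℕ, k < j →
    ∃ x y : B.PathSpace, B.DepthPair T k x y ∧ B.HasCut T j x y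

/-- Very well timed: for every `k ≥ 1` there is a depth `k` pair having a `j` cut
for every `j > k`. -/
def VeryWellTimed (T : B.PathSpace ≃ B.PathSpace) : Prop :=
  ∀ k : ℕ, 1 ≤ k →
    ∃ x y : B.PathSpace, B.DepthPair T k x y ∧ ∀ j : ℕ, k < j → B.HasCut T j x y

/-- Weakly well timed: for infinitely many `k ≥ 1`, for every `j > k` there is a
depth `k` pair with a `j` cut. -/
def WeaklyWellTimed (T : B.PathSpace ≃ B.PathSpace) : Prop :=
  ∀ K : ℕ, ∃ k : ℕ, K ≤ k ∧ 1 ≤ k ∧ ∀ j : ℕ, k < j →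
    ∃ x y : B.PathSpace, B.DepthPair T k x y ∧ B.HasCut T j x y

/-- Untimed: for every `k ≥ 1` there is a `j > k` such that no depth `k` pair has a
`j` cut. -/
def Untimed (T : B.PathSpace ≃ B.PathSpace) : Prop :=
  ∀ k : ℕ, 1 ≤ k → ∃ j : ℕ, k < j ∧
    ∀ x y : B.PathSpace, B.DepthPair T k x y → ¬ B.HasCut T j x y

/-- Very untimed: for every `k ≥ 1`, no depth `k` pair has a `(k+1)` cut. -/
def VeryUntimed (T : B.PathSpace ≃ B.PathSpace) : Prop :=
  ∀ k : ℕ, 1 ≤ k →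
    ∀ x y : B.PathSpace, B.DepthPair T k x y → ¬ B.HasCut T (k + 1) x y

/-- Finite paths from the root to level `n`. -/
def FinPath (n : ℕ) : Type :=
  { f : (i : Fin n) → B.E i.val //
    ∀ (i : ℕ) (h : i + 1 < n), B.tgt (f ⟨i, by omega⟩) = B.src (f ⟨i + 1, h⟩) }

/-- The lexicographic (from the end) order on finite paths to level `n` induced by
the orders on the edges. -/
def finLT {n : ℕ} (p q : B.FinPath n) : Prop :=
  ∃ (N : ℕ) (h : N < n), B.elt (p.1 ⟨N, h⟩) (q.1 ⟨N, h⟩) ∧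
    ∀ (i : ℕ) (hi : i < n), N < i → p.1 ⟨i, hi⟩ = q.1 ⟨i, hi⟩

/-- The finite path `p` to level `n` ends at the vertex `v`. -/
def EndsAt {n : ℕ} (p : B.FinPath n) (v : B.V n) : Prop :=
  ∀ (m : ℕ) (h : n = m + 1), B.tgt (p.1 ⟨m, by omega⟩) = B.castV h v

/-- The initial segment of an infinite path, from the root to level `n`. -/
def pathInit (x : B.PathSpace) (n : ℕ) : B.FinPath n :=
  ⟨fun i => x.1 i.val, fun i _ => x.2 i⟩

/-- The vertex of an infinite path at level `n`. -/
def pathVert (x : B.PathSpace) (n : ℕ) : B.V n := B.src (x.1 n)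

theorem pathInit_endsAt (x : B.PathSpace) (n : ℕ) :
    B.EndsAt (B.pathInit x n) (B.pathVert x n) := by
  intro m h
  subst h
  exact x.2 m

/-- Truncation of a finite path to a lower level. -/
def truncTo {n : ℕ} (k : ℕ) (hk : k ≤ n) (p : B.FinPath n) : B.FinPath k :=
  ⟨fun i => p.1 ⟨i.val, by omega⟩, fun i h => p.2 i (by omega)⟩

/-- Paths `x, x'` are `k`-equivalent at level `n`: there is an order isomorphism
between the sets of finite paths from the root into their level-`n` vertices which
preserves truncations to level `k` (equality of `k`-basic blocks) and which matches
the initial segment of `x` with the initial segment of `x'` (the "dot" is in the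
same place). -/
def KEquivAt (k n : ℕ) (x x' : B.PathSpace) : Prop :=
  ∃ φ : { p : B.FinPath n // B.EndsAt p (B.pathVert x n) } ≃
      { p : B.FinPath n // B.EndsAt p (B.pathVert x' n) },
    (∀ p q, B.finLT p.1 q.1 ↔ B.finLT (φ p).1 (φ q).1) ∧
    (∀ p (i : ℕ) (hik : i < k) (hin : i < n), ((φ p).1).1 ⟨i, hin⟩ = (p.1).1 ⟨i, hin⟩) ∧
    φ ⟨B.pathInit x n, B.pathInit_endsAt x n⟩ = ⟨B.pathInit x' n, B.pathInit_endsAt x' n⟩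

/-- Paths are `k`-equivalent: they agree from the root to level `k` and are
`k`-equivalent at every level `n > k`. -/
def KEquivPaths (k : ℕ) (x x' : B.PathSpace) : Prop :=
  (∀ i : ℕ, i < k → x.1 i = x'.1 i) ∧ ∀ n : ℕ, k < n → B.KEquivAt k n x x'

/-- Standard nonexpansive: for every `k ≥ 1` there is a pair of distinct
`k`-equivalent paths. -/
def SNE : Prop := ∀ k : ℕ, 1 ≤ k → ∃ x x' : B.PathSpace, x ≠ x' ∧ B.KEquivPaths k x x'

/-!  ### Telescoping  -/

theorem castV_eq_of_heq {m n : ℕ} (h : m = n) {v : B.V m} {w : B.V n} (hw : HEq v w) :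
    B.castV h v = w := by
  subst h
  exact eq_of_heq hw

theorem castV_heq {m n : ℕ} (h : m = n) (v : B.V m) : HEq (B.castV h v) v := by
  subst h
  rfl

theorem castV_inj {m n : ℕ} (h : m = n) {v w : B.V m}
    (hvw : B.castV h v = B.castV h w) : v = w := by
  subst h
  exact hvw

def castE {m n : ℕ} (h : m = n) (e : B.E m) : B.E n := h ▸ e

noncomputable def chainFrom (a : ℕ) (v : B.V a) : (i : ℕ) → B.E (a + i)
  | 0 => (B.hasOut a v).choose
  | i + 1 => (B.hasOut (a + i + 1) (B.tgt (chainFrom a v i))).choose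

theorem chainFrom_src_zero (a : ℕ) (v : B.V a) : B.src (B.chainFrom a v 0) = v :=
  (B.hasOut a v).choose_spec

theorem chainFrom_src_succ (a : ℕ) (v : B.V a) (i : ℕ) :
    B.src (B.chainFrom a v (i + 1)) = B.tgt (B.chainFrom a v i) :=
  (B.hasOut (a + i + 1) (B.tgt (B.chainFrom a v i))).choose_spec

noncomputable def chainTo (a : ℕ) : (j : ℕ) → (w : B.V (a + j + 1)) → (i : ℕ) → i ≤ j → B.E (a + i)
  | 0, w, i, _ => B.castE (by omega : a + 0 = a + i) (B.hasIn a w).choose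
  | j + 1, w, i, _ =>
      if h : i ≤ j then chainTo a j (B.src (B.hasIn (a + j + 1) w).choose) i h
      else B.castE (by omega : a + (j + 1) = a + i) (B.hasIn (a + j + 1) w).choose

theorem chainTo_tgt_last (a : ℕ) : ∀ (j : ℕ) (w : B.V (a + j + 1)),
    B.tgt (B.chainTo a j w j le_rfl) = w := by
  intro j w
  cases j with
  | zero =>
      simp only [chainTo]
      exact (B.hasIn a w).choose_spec
  | succ j =>
      simp only [chainTo]
      rw [dif_neg (by omega : ¬ j + 1 ≤ j)]
      exact (B.hasIn (a + j + 1) w).choose_spec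

theorem chainTo_chain (a : ℕ) : ∀ (j : ℕ) (w : B.V (a + j + 1)) (i : ℕ) (h : i + 1 ≤ j)
    (h' : i ≤ j), B.tgt (B.chainTo a j w i h') = B.src (B.chainTo a j w (i + 1) h) := by
  intro j
  induction j with
  | zero => intro w i h h'; omega
  | succ j ih =>
      intro w i h h'
      by_cases hij : i + 1 ≤ j
      · simp only [chainTo]
        rw [dif_pos (by omega : i ≤ j), dif_pos hij]
        exact ih _ i hij (by omega)
      · have hi : i = j := by omega
        subst hi
        simp only [chainTo]
        rw [dif_pos (le_refl i), dif_neg (by omega : ¬ i + 1 ≤ i)]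
        exact B.chainTo_tgt_last a i _


def TelE (a b : ℕ) : Type :=
  { f : (i : Fin (b - a)) → B.E (a + i.val) //
    ∀ (i : ℕ) (h : i + 1 < b - a), B.tgt (f ⟨i, by omega⟩) = B.src (f ⟨i + 1, h⟩) }

def telSrc {a b : ℕ} (hab : a < b) (f : B.TelE a b) : B.V a :=
  B.src (f.1 ⟨0, by omega⟩)

def telTgt {a b : ℕ} (hab : a < b) (f : B.TelE a b) : B.V b :=
  B.castV (by omega : a + (b - a - 1) + 1 = b) (B.tgt (f.1 ⟨b - a - 1, by omega⟩))

def telLT {a b : ℕ} (f g : B.TelE a b) : Prop :=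
  ∃ (N : ℕ) (h : N < b - a), B.elt (f.1 ⟨N, h⟩) (g.1 ⟨N, h⟩) ∧
    ∀ (i : ℕ) (hi : i < b - a), N < i → f.1 ⟨i, hi⟩ = g.1 ⟨i, hi⟩

noncomputable def Telescope (ns : ℕ → ℕ) (hmono : StrictMono ns) (h0 : ns 0 = 0) : BDiagram where
  V l := B.V (ns l)
  E l := B.TelE (ns l) (ns (l + 1))
  fintV l := B.fintV (ns l)
  fintE l := by
    classical
    letI : ∀ i : Fin (ns (l + 1) - ns l), Fintype (B.E (ns l + i.val)) := fun i => B.fintE _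
    exact Subtype.fintype _
  nonV l := B.nonV (ns l)
  rootSubsingleton := by show Subsingleton (B.V (ns 0)); rw [h0]; exact B.rootSubsingleton
  src {l} f := B.telSrc (hmono (Nat.lt_succ_self l)) f
  tgt {l} f := B.telTgt (hmono (Nat.lt_succ_self l)) f
  hasOut := by
    intro l v
    refine ⟨⟨fun i => B.chainFrom (ns l) v i.val,
      fun i h => (B.chainFrom_src_succ (ns l) v i).symm⟩, ?_⟩
    exact B.chainFrom_src_zero (ns l) v
  hasIn := by
    intro l w
    have hab : ns l < ns (l + 1) := hmono (Nat.lt_succ_self l)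
    have hj : ns l + (ns (l + 1) - ns l - 1) + 1 = ns (l + 1) := by omega
    refine ⟨⟨fun i => B.chainTo (ns l) (ns (l + 1) - ns l - 1) (B.castV hj.symm w) i.val
        (by omega), fun i h => B.chainTo_chain _ _ _ i (by omega) (by omega)⟩, ?_⟩
    show B.castV (by omega) (B.tgt (B.chainTo (ns l) (ns (l + 1) - ns l - 1)
      (B.castV hj.symm w) (ns (l + 1) - ns l - 1) (by omega))) = w
    rw [B.chainTo_tgt_last]
    exact B.castV_eq_of_heq _ (B.castV_heq _ w)
  elt {l} f g := B.telLT f g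
  elt_tgt := by
    rintro l f g ⟨N, hN, hlt, hgt⟩
    show B.telTgt _ f = B.telTgt _ g
    unfold telTgt
    refine congrArg (B.castV _) ?_
    rcases eq_or_lt_of_le (show N ≤ ns (l + 1) - ns l - 1 by omega) with h | h
    · subst h
      exact B.elt_tgt _ _ _ hlt
    · exact congrArg B.tgt (hgt _ (by omega) h)
  elt_irrefl := by
    rintro l f ⟨N, h, hlt, -⟩
    exact B.elt_irrefl _ _ hlt
  elt_trans := by
    rintro l f g h ⟨N₁, hN₁, hlt₁, hgt₁⟩ ⟨N₂, hN₂, hlt₂, hgt₂⟩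
    rcases lt_trichotomy N₁ N₂ with hc | hc | hc
    · exact ⟨N₂, hN₂, by rw [hgt₁ N₂ hN₂ hc]; exact hlt₂,
        fun i hi hN => (hgt₁ i hi (by omega)).trans (hgt₂ i hi hN)⟩
    · subst hc
      exact ⟨N₁, hN₁, B.elt_trans _ _ _ _ hlt₁ hlt₂,
        fun i hi hN => (hgt₁ i hi hN).trans (hgt₂ i hi hN)⟩
    · refine ⟨N₁, hN₁, ?_, fun i hi hN => (hgt₁ i hi hN).trans (hgt₂ i hi (by omega))⟩
      rw [← hgt₂ N₁ hN₁ hc]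
      exact hlt₁
  elt_total := by
    intro l f g htgt hne
    classical
    have hab : ns l < ns (l + 1) := hmono (Nat.lt_succ_self l)
    set b := ns (l + 1) - ns l with hb
    have hex : ∃ N, ∃ h : N < b, f.1 ⟨N, h⟩ ≠ g.1 ⟨N, h⟩ := by
      by_contra hco
      push_neg at hco
      exact hne (Subtype.ext (funext fun i => hco i.val i.isLt))
    set P : ℕ → Prop := fun N => ∃ h : N < b, f.1 ⟨N, h⟩ ≠ g.1 ⟨N, h⟩ with hP
    obtain ⟨N₀, hN₀⟩ := hex
    set N := Nat.findGreatest P b with hNdef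
    have hPN : P N := Nat.findGreatest_spec (le_of_lt hN₀.choose) hN₀
    have hafter : ∀ i (hi : i < b), N < i → f.1 ⟨i, hi⟩ = g.1 ⟨i, hi⟩ := by
      intro i hi hNi
      by_contra hcon
      exact Nat.findGreatest_is_greatest hNi (le_of_lt hi) ⟨hi, hcon⟩
    clear_value N
    obtain ⟨hNb, hNne⟩ := hPN
    have htgtN : B.tgt (f.1 ⟨N, hNb⟩) = B.tgt (g.1 ⟨N, hNb⟩) := by
      rcases eq_or_lt_of_le (show N ≤ b - 1 by omega) with h | h
      · -- N is the last index; use equality of targets of the composite edges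
        subst h
        exact B.castV_inj _ htgt
      · have h2 : f.1 ⟨N + 1, by omega⟩ = g.1 ⟨N + 1, by omega⟩ :=
          hafter (N + 1) (by omega) (by omega)
        rw [f.2 N (by omega), g.2 N (by omega), h2]
    rcases B.elt_total _ _ _ htgtN hNne with h | h
    · exact Or.inl ⟨N, hNb, h, hafter⟩
    · exact Or.inr ⟨N, hNb, h, fun i hi hN => (hafter i hi hN).symm⟩

def teleMap (ns : ℕ → ℕ) (hmono : StrictMono ns) (h0 : ns 0 = 0) (x : B.PathSpace) :
    (B.Telescope ns hmono h0).PathSpace :=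
  ⟨fun l => ⟨fun i => x.1 (ns l + i.val), fun i _ => x.2 (ns l + i)⟩, fun l => by
    have hab : ns l < ns (l + 1) := hmono (Nat.lt_succ_self l)
    have hm : ns l + (ns (l + 1) - ns l - 1) + 1 = ns (l + 1) := by omega
    show B.castV _ (B.tgt (x.1 (ns l + (ns (l + 1) - ns l - 1)))) = B.src (x.1 (ns (l + 1) + 0))
    rw [x.2 (ns l + (ns (l + 1) - ns l - 1))]
    exact B.castV_eq_of_heq _ (by rw [hm]; exact HEq.rfl)⟩


/-- Level `n+1` is uniformly ordered: there is a single nonempty block `P` of paths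
from the root to level `n` such that the `n`-basic block at every vertex at level
`n+1` is a positive power of `P`. -/
def UniformlyOrderedLevel (n : ℕ) : Prop :=
  ∃ (p : ℕ) (hp : 0 < p) (P : Fin p → B.FinPath n),
    ∀ v : B.V (n + 1), ∃ (m : ℕ), 0 < m ∧
      ∃ enum : Fin (m * p) ≃ { q : B.FinPath (n + 1) // B.EndsAt q v },
        (∀ i j : Fin (m * p), i < j ↔ B.finLT (enum i).1 (enum j).1) ∧
        (∀ i : Fin (m * p),
          B.truncTo n (Nat.le_succ n) (enum i).1 = P ⟨i.val % p, Nat.mod_lt _ hp⟩)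

/-- The ordinal label of an edge: its position in the linear order on the edges
into its target. -/
noncomputable def edgeLabel {n : ℕ} (e : B.E n) : ℕ := Nat.card { e' : B.E n // B.elt e' e }

/-- Deterministic: for every `n ≥ 1`, distinct edges with the same source at level
`n` have different ordinal labels. -/
def Deterministic : Prop :=
  ∀ n : ℕ, 1 ≤ n → ∀ e f : B.E n, B.src e = B.src f → e ≠ f →
    B.edgeLabel e ≠ B.edgeLabel f

end BDiagram

/-- A Bratteli–Vershik system: a simple, properly ordered ordered Bratteli diagram
together with its Vershik map. -/
structure BVSystem where
  B : BDiagram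
  T : B.PathSpace ≃ B.PathSpace
  proper : B.ProperlyOrdered
  simple : B.Simple
  vershik : B.IsVershik T

/-- Conjugacy of systems: an equivariant homeomorphism of the path spaces taking
minimal paths to minimal paths. -/
def Conjugate (S S' : BVSystem) : Prop :=
  ∃ φ : S.B.PathSpace ≃ S'.B.PathSpace,
    (@Continuous _ _ S.B.pathTop S'.B.pathTop φ) ∧
    (@Continuous _ _ S'.B.pathTop S.B.pathTop φ.symm) ∧
    (∀ x, φ (S.T x) = S'.T (φ x)) ∧
    (∀ x, S.B.IsMinPath x → S'.B.IsMinPath (φ x))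

/-- An odometer: a system whose diagram has exactly one vertex at every level. -/
def IsOdometer (S : BVSystem) : Prop := ∀ n, Subsingleton (S.B.V n)

/-!
Being `k`-equivalent at all sufficiently high levels is invariant under the Vershik map `T`.
At a high level `n` the paths `x` and `T x` pass through the same vertex, and the initial segment
of `T x` covers that of `x` in the ordered list of paths into this vertex; an order isomorphism
between two `k`-basic blocks preserves covers, so it matches the positions of `T x` and `T x'`
exactly when it matches those of `x` and `x'`. When `x` is maximal, so is `x'` (a maximal path
is the one whose position is eventually last), and proper ordering forces `x = x'`.
Hence `T^m x` and `T^m x'` are `k`-equivalent at high levels for every `m : ℤ`, and so agree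
below level `k`: a pair of distinct `k`-equivalent paths has the same `k`-coding.
-/

namespace BDiagram

open Filter

variable (B : BDiagram)

theorem finLT_irrefl {n : ℕ} (p : B.FinPath n) : ¬ B.finLT p p := by
  rintro ⟨N, hN, h, -⟩
  exact B.elt_irrefl _ _ h

theorem finLT_trans {n : ℕ} {p q r : B.FinPath n} (hpq : B.finLT p q) (hqr : B.finLT q r) :
    B.finLT p r := by
  obtain ⟨N₁, hN₁, h₁, hg₁⟩ := hpq
  obtain ⟨N₂, hN₂, h₂, hg₂⟩ := hqr
  rcases lt_trichotomy N₁ N₂ with hc | rfl | hc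
  · refine ⟨N₂, hN₂, ?_, fun i hi h => (hg₁ i hi (hc.trans h)).trans (hg₂ i hi h)⟩
    rwa [hg₁ N₂ hN₂ hc]
  · exact ⟨N₁, hN₁, B.elt_trans _ _ _ _ h₁ h₂, fun i hi h => (hg₁ i hi h).trans (hg₂ i hi h)⟩
  · refine ⟨N₁, hN₁, ?_, fun i hi h => (hg₁ i hi h).trans (hg₂ i hi (hc.trans h))⟩
    rwa [← hg₂ N₁ hN₁ hc]

/-- Two distinct paths into the same vertex are compared at the last level where they differ;
their edges there have the same target, because the paths agree above it. -/
theorem finLT_trichotomous {n : ℕ} {v : B.V n} {p q : B.FinPath n} (hp : B.EndsAt p v)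
    (hq : B.EndsAt q v) (hpq : ¬ B.finLT p q) (hqp : ¬ B.finLT q p) : p = q := by
  classical
  by_contra hne
  set S := Finset.univ.filter fun i : Fin n => p.1 i ≠ q.1 i
  have hS : S.Nonempty := by
    by_contra hS
    refine hne (Subtype.ext (funext fun i => ?_))
    by_contra hi
    exact hS ⟨i, Finset.mem_filter.2 ⟨Finset.mem_univ i, hi⟩⟩
  set N := S.max' hS
  have hN : p.1 N ≠ q.1 N := (Finset.mem_filter.1 (S.max'_mem hS)).2
  have habove : ∀ (i : ℕ) (hi : i < n), N.val < i → p.1 ⟨i, hi⟩ = q.1 ⟨i, hi⟩ := by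
    intro i hi hNi
    by_contra h
    exact absurd (S.le_max' ⟨i, hi⟩ (Finset.mem_filter.2 ⟨Finset.mem_univ _, h⟩)) (not_le.2 hNi)
  have htgt : B.tgt (p.1 N) = B.tgt (q.1 N) := by
    rcases Nat.lt_or_ge (N.val + 1) n with h | h
    · rw [p.2 N h, q.2 N h, habove _ h (Nat.lt_succ_self _)]
    · have hn : n = N.val + 1 := by omega
      exact (hp N hn).trans (hq N hn).symm
  rcases B.elt_total _ _ _ htgt hN with h | h
  · exact hpq ⟨N, N.2, h, habove⟩
  · exact hqp ⟨N, N.2, h, fun i hi hNi => (habove i hi hNi).symm⟩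

abbrev PathsTo {n : ℕ} (v : B.V n) : Type := { p : B.FinPath n // B.EndsAt p v }

instance {n : ℕ} (v : B.V n) : IsStrictTotalOrder (B.PathsTo v) (fun p q => B.finLT p.1 q.1) where
  trichotomous p q hpq hqp := Subtype.ext (B.finLT_trichotomous p.2 q.2 hpq hqp)
  irrefl p := B.finLT_irrefl p.1
  trans _ _ _ := B.finLT_trans

noncomputable instance {n : ℕ} (v : B.V n) : LinearOrder (B.PathsTo v) := by
  classical
  exact linearOrderOfSTO (fun p q : B.PathsTo v => B.finLT p.1 q.1)

def dot (x : B.PathSpace) (n : ℕ) : B.PathsTo (B.pathVert x n) :=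
  ⟨B.pathInit x n, B.pathInit_endsAt x n⟩

def castPaths {n : ℕ} {v w : B.V n} (h : v = w) (p : B.PathsTo v) : B.PathsTo w :=
  ⟨p.1, h ▸ p.2⟩

/-- The `k`-basic blocks at `v` and `v'` coincide, and `a`, `a'` occupy the same place in them. -/
def KEquivPos (k : ℕ) {n : ℕ} {v v' : B.V n} (a : B.PathsTo v) (a' : B.PathsTo v') : Prop :=
  ∃ φ : B.PathsTo v ≃o B.PathsTo v',
    (∀ p (i : ℕ) (_ : i < k) (hin : i < n), ((φ p).1).1 ⟨i, hin⟩ = (p.1).1 ⟨i, hin⟩) ∧ φ a = a'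

theorem kEquivAt_iff_kEquivPos {k n : ℕ} {x x' : B.PathSpace} :
    B.KEquivAt k n x x' ↔ B.KEquivPos k (B.dot x n) (B.dot x' n) := by
  constructor
  · rintro ⟨φ, hlt, htrunc, hdot⟩
    exact ⟨OrderIso.ofRelIsoLT ⟨φ, fun {p q} => (hlt p q).symm⟩, htrunc, hdot⟩
  · rintro ⟨φ, htrunc, hdot⟩
    exact ⟨φ.toEquiv, fun p q => φ.lt_iff_lt.symm, htrunc, hdot⟩

variable {B}

namespace KEquivPos

variable {k n : ℕ} {v v' : B.V n} {a : B.PathsTo v} {a' : B.PathsTo v'}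

theorem refl (k : ℕ) (a : B.PathsTo v) : B.KEquivPos k a a :=
  ⟨OrderIso.refl _, fun _ _ _ _ => rfl, rfl⟩

theorem isMax_iff (h : B.KEquivPos k a a') : IsMax a ↔ IsMax a' := by
  obtain ⟨φ, -, rfl⟩ := h
  exact φ.isMax_apply.symm

theorem isMin_iff (h : B.KEquivPos k a a') : IsMin a ↔ IsMin a' := by
  obtain ⟨φ, -, rfl⟩ := h
  exact φ.isMin_apply.symm

theorem iff_of_covBy {b : B.PathsTo v} {b' : B.PathsTo v'} (hab : a ⋖ b) (hab' : a' ⋖ b') :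
    B.KEquivPos k a a' ↔ B.KEquivPos k b b' := by
  refine exists_congr fun φ => and_congr_right fun _ => ⟨fun h => ?_, fun h => ?_⟩
  · exact ((apply_covBy_apply_iff φ).2 hab).unique_right (h ▸ hab')
  · exact ((apply_covBy_apply_iff φ).2 hab).unique_left (h ▸ hab')

theorem apply_eq_of_lt (h : B.KEquivPos k a a') {i : ℕ} (hik : i < k) (hin : i < n) :
    a'.1.1 ⟨i, hin⟩ = a.1.1 ⟨i, hin⟩ := by
  obtain ⟨φ, htrunc, rfl⟩ := h
  exact htrunc a i hik hin

end KEquivPos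

theorem kEquivPos_castPaths_iff {k n : ℕ} {v v' w w' : B.V n} (h : v = w) (h' : v' = w')
    (a : B.PathsTo v) (a' : B.PathsTo v') :
    B.KEquivPos k (B.castPaths h a) (B.castPaths h' a') ↔ B.KEquivPos k a a' := by
  subst h h'
  rfl

theorem KEquivAt.apply_eq_of_lt {B : BDiagram} {k n : ℕ} {x x' : B.PathSpace}
    (h : B.KEquivAt k n x x') (hkn : k ≤ n) {i : ℕ} (hik : i < k) : x.1 i = x'.1 i :=
  ((B.kEquivAt_iff_kEquivPos.1 h).apply_eq_of_lt hik (by omega)).symm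

variable (B)

theorem kEquivAt_refl (k n : ℕ) (x : B.PathSpace) : B.KEquivAt k n x x :=
  B.kEquivAt_iff_kEquivPos.2 (KEquivPos.refl k _)

theorem isMax_dot_of_isMaxPath {x : B.PathSpace} (hx : B.IsMaxPath x) (n : ℕ) :
    IsMax (B.dot x n) :=
  isMax_iff_forall_not_lt.2 fun _ ⟨N, _, h, _⟩ => hx N _ h

theorem isMin_dot_of_isMinPath {x : B.PathSpace} (hx : B.IsMinPath x) (n : ℕ) :
    IsMin (B.dot x n) :=
  isMin_iff_forall_not_lt.2 fun _ ⟨N, _, h, _⟩ => hx N _ h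

def appendTail (x : B.PathSpace) (n : ℕ) (c : B.PathsTo (B.pathVert x n)) : B.PathSpace :=
  ⟨fun j => if hj : j < n then c.1.1 ⟨j, hj⟩ else x.1 j, by
    intro j
    beta_reduce
    by_cases h1 : j + 1 < n
    · rw [dif_pos (by omega : j < n), dif_pos h1]
      exact c.1.2 j h1
    · by_cases h2 : j < n
      · have hn : n = j + 1 := by omega
        rw [dif_pos h2, dif_neg h1]
        have h := c.2 j hn
        subst hn
        exact h
      · rw [dif_neg h2, dif_neg h1]
        exact x.2 j⟩

theorem appendTail_eq_of_agree {x z : B.PathSpace} {n : ℕ} (c : B.PathsTo (B.pathVert x n))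
    (hz : ∀ j, n ≤ j → z.1 j = x.1 j) (hc : c.1 = B.pathInit z n) : B.appendTail x n c = z := by
  refine Subtype.ext (funext fun j => ?_)
  show (if hj : j < n then c.1.1 ⟨j, hj⟩ else x.1 j) = z.1 j
  split_ifs with h
  · rw [hc]
    rfl
  · exact (hz j (by omega)).symm

theorem pathLT_appendTail {x : B.PathSpace} {n : ℕ} {c d : B.PathsTo (B.pathVert x n)}
    (h : c < d) : B.pathLT (B.appendTail x n c) (B.appendTail x n d) := by
  obtain ⟨N, hN, he, hg⟩ := h
  refine ⟨N, ?_, fun j hj => ?_⟩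
  · simp only [appendTail, dif_pos hN]
    exact he
  · simp only [appendTail]
    split_ifs with h
    · exact hg j h hj
    · rfl

theorem eventually_agree_and_finLT_of_pathLT {y z : B.PathSpace} (h : B.pathLT y z) :
    ∀ᶠ n in atTop, (∀ j, n ≤ j → z.1 j = y.1 j) ∧
      B.finLT (B.pathInit y n) (B.pathInit z n) := by
  obtain ⟨N, hN, hagree⟩ := h
  filter_upwards [eventually_gt_atTop N] with n hn
  exact ⟨fun j hj => (hagree j (by omega)).symm, N, hn, hN, fun i _ hi => hagree i hi⟩

theorem pathVert_eq_of_agree {y z : B.PathSpace} {n : ℕ} (h : ∀ j, n ≤ j → z.1 j = y.1 j) :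
    B.pathVert z n = B.pathVert y n :=
  congrArg B.src (h n le_rfl)

theorem eventually_not_isMax_dot_of_pathLT {y z : B.PathSpace} (h : B.pathLT y z) :
    ∀ᶠ n in atTop, ¬ IsMax (B.dot y n) := by
  filter_upwards [B.eventually_agree_and_finLT_of_pathLT h] with n ⟨hagree, hlt⟩
  exact not_isMax_iff.2 ⟨B.castPaths (B.pathVert_eq_of_agree hagree) (B.dot z n), hlt⟩

theorem eventually_not_isMin_dot_of_pathLT {y z : B.PathSpace} (h : B.pathLT y z) :
    ∀ᶠ n in atTop, ¬ IsMin (B.dot z n) := by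
  filter_upwards [B.eventually_agree_and_finLT_of_pathLT h] with n ⟨hagree, hlt⟩
  exact not_isMin_iff.2 ⟨B.castPaths (B.pathVert_eq_of_agree hagree).symm (B.dot y n), hlt⟩

/-- A path strictly between the initial segments of `y` and `z` extends, by their common tail,
to a path strictly between `y` and `z`. -/
theorem eventually_covBy_dot_of_pathLT {y z : B.PathSpace} (h : B.pathLT y z)
    (hbetween : ∀ w, B.pathLT y w → ¬ B.pathLT w z) :
    ∀ᶠ n in atTop, ∃ hv : B.pathVert z n = B.pathVert y n,
      B.dot y n ⋖ B.castPaths hv (B.dot z n) := by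
  filter_upwards [B.eventually_agree_and_finLT_of_pathLT h] with n ⟨hagree, hlt⟩
  have hy : B.appendTail y n (B.dot y n) = y := B.appendTail_eq_of_agree _ (fun _ _ => rfl) rfl
  have hz : B.appendTail y n (B.castPaths (B.pathVert_eq_of_agree hagree) (B.dot z n)) = z :=
    B.appendTail_eq_of_agree _ hagree rfl
  refine ⟨B.pathVert_eq_of_agree hagree, hlt, fun c hyc hcz => hbetween (B.appendTail y n c) ?_ ?_⟩
  · simpa only [hy] using B.pathLT_appendTail hyc
  · simpa only [hz] using B.pathLT_appendTail hcz

theorem kEquivAt_iff_of_covBy {k n : ℕ} {y y' z z' : B.PathSpace}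
    (hv : B.pathVert z n = B.pathVert y n) (hv' : B.pathVert z' n = B.pathVert y' n)
    (h : B.dot y n ⋖ B.castPaths hv (B.dot z n)) (h' : B.dot y' n ⋖ B.castPaths hv' (B.dot z' n)) :
    B.KEquivAt k n y y' ↔ B.KEquivAt k n z z' := by
  rw [kEquivAt_iff_kEquivPos, kEquivAt_iff_kEquivPos, ← B.kEquivPos_castPaths_iff hv hv']
  exact KEquivPos.iff_of_covBy h h'

theorem iterZ_add_one_apply (T : B.PathSpace ≃ B.PathSpace) (m : ℤ) (x : B.PathSpace) :
    B.iterZ T (m + 1) x = B.iterZ T m (T x) := by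
  rw [iterZ, zpow_add_one, Equiv.Perm.mul_apply]
  rfl

theorem iterZ_sub_one_apply (T : B.PathSpace ≃ B.PathSpace) (m : ℤ) (x : B.PathSpace) :
    B.iterZ T (m - 1) x = B.iterZ T m (T.symm x) := by
  rw [iterZ, zpow_sub_one, Equiv.Perm.mul_apply, Equiv.Perm.inv_def]
  rfl

section Vershik

variable {T : B.PathSpace ≃ B.PathSpace}

theorem isMinPath_apply_iff (hT : B.IsVershik T) {x : B.PathSpace} :
    B.IsMinPath (T x) ↔ B.IsMaxPath x := by
  refine ⟨fun hmin => ?_, hT.2 x⟩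
  by_contra hx
  obtain ⟨N, h, -⟩ := (hT.1 x hx).1
  exact hmin N _ h

theorem isMaxPath_iff_eventually_isMax_dot (hT : B.IsVershik T) {x : B.PathSpace} :
    B.IsMaxPath x ↔ ∀ᶠ n in atTop, IsMax (B.dot x n) := by
  refine ⟨fun hx => .of_forall (B.isMax_dot_of_isMaxPath hx), fun h => ?_⟩
  by_contra hx
  obtain ⟨n, hmax, hnot⟩ := (h.and (B.eventually_not_isMax_dot_of_pathLT (hT.1 x hx).1)).exists
  exact hnot hmax

theorem isMinPath_iff_eventually_isMin_dot (hT : B.IsVershik T) {x : B.PathSpace} :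
    B.IsMinPath x ↔ ∀ᶠ n in atTop, IsMin (B.dot x n) := by
  refine ⟨fun hx => .of_forall (B.isMin_dot_of_isMinPath hx), fun h => ?_⟩
  by_contra hx
  have hpred : ¬ B.IsMaxPath (T.symm x) := by
    rwa [← B.isMinPath_apply_iff hT, Equiv.apply_symm_apply]
  have hlt := (hT.1 _ hpred).1
  rw [Equiv.apply_symm_apply] at hlt
  obtain ⟨n, hmin, hnot⟩ := (h.and (B.eventually_not_isMin_dot_of_pathLT hlt)).exists
  exact hnot hmin

theorem isMaxPath_iff_of_eventually_kEquivAt (hT : B.IsVershik T) {k : ℕ} {x x' : B.PathSpace}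
    (h : ∀ᶠ n in atTop, B.KEquivAt k n x x') : B.IsMaxPath x ↔ B.IsMaxPath x' := by
  rw [B.isMaxPath_iff_eventually_isMax_dot hT, B.isMaxPath_iff_eventually_isMax_dot hT]
  exact eventually_congr (h.mono fun n hn => (B.kEquivAt_iff_kEquivPos.1 hn).isMax_iff)

theorem isMinPath_iff_of_eventually_kEquivAt (hT : B.IsVershik T) {k : ℕ} {x x' : B.PathSpace}
    (h : ∀ᶠ n in atTop, B.KEquivAt k n x x') : B.IsMinPath x ↔ B.IsMinPath x' := by
  rw [B.isMinPath_iff_eventually_isMin_dot hT, B.isMinPath_iff_eventually_isMin_dot hT]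
  exact eventually_congr (h.mono fun n hn => (B.kEquivAt_iff_kEquivPos.1 hn).isMin_iff)

theorem eventually_kEquivAt_apply_iff_of_not_isMaxPath (hT : B.IsVershik T) {k : ℕ}
    {x x' : B.PathSpace} (hx : ¬ B.IsMaxPath x) (hx' : ¬ B.IsMaxPath x') :
    (∀ᶠ n in atTop, B.KEquivAt k n x x') ↔
      ∀ᶠ n in atTop, B.KEquivAt k n (T x) (T x') := by
  refine eventually_congr ?_
  filter_upwards [B.eventually_covBy_dot_of_pathLT (hT.1 x hx).1 (hT.1 x hx).2,
    B.eventually_covBy_dot_of_pathLT (hT.1 x' hx').1 (hT.1 x' hx').2] with n ⟨hv, h⟩ ⟨hv', h'⟩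
  exact B.kEquivAt_iff_of_covBy hv hv' h h'

/-- If exactly one of `x`, `x'` is maximal then neither side holds, since each side forces
`x` and `x'` to be maximal together (for the right side, through `T x` and `T x'` being minimal
together). -/
theorem eventually_kEquivAt_apply_iff (hproper : B.ProperlyOrdered) (hT : B.IsVershik T)
    {k : ℕ} {x x' : B.PathSpace} :
    (∀ᶠ n in atTop, B.KEquivAt k n x x') ↔
      ∀ᶠ n in atTop, B.KEquivAt k n (T x) (T x') := by
  by_cases hiff : B.IsMaxPath x ↔ B.IsMaxPath x'
  · by_cases hx : B.IsMaxPath x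
    · obtain rfl := hproper.2.unique hx (hiff.1 hx)
      exact iff_of_true (.of_forall fun n => B.kEquivAt_refl k n x)
        (.of_forall fun n => B.kEquivAt_refl k n (T x))
    · exact B.eventually_kEquivAt_apply_iff_of_not_isMaxPath hT hx (hiff.not.1 hx)
  · refine iff_of_false (fun h => hiff (B.isMaxPath_iff_of_eventually_kEquivAt hT h)) fun h => ?_
    refine hiff ?_
    rw [← B.isMinPath_apply_iff hT, ← B.isMinPath_apply_iff hT]
    exact B.isMinPath_iff_of_eventually_kEquivAt hT h

theorem eventually_kEquivAt_iterZ (hproper : B.ProperlyOrdered) (hT : B.IsVershik T) {k : ℕ}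
    (m : ℤ) {x x' : B.PathSpace} (h : ∀ᶠ n in atTop, B.KEquivAt k n x x') :
    ∀ᶠ n in atTop, B.KEquivAt k n (B.iterZ T m x) (B.iterZ T m x') := by
  induction m using Int.induction_on generalizing x x' with
  | zero => simpa [iterZ] using h
  | succ m ih =>
    rw [iterZ_add_one_apply, iterZ_add_one_apply]
    exact ih ((B.eventually_kEquivAt_apply_iff hproper hT).1 h)
  | pred m ih =>
    rw [iterZ_sub_one_apply, iterZ_sub_one_apply]
    refine ih ((B.eventually_kEquivAt_apply_iff hproper hT).2 ?_)
    simpa only [Equiv.apply_symm_apply] using h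

end Vershik

end BDiagram

theorem sne_implies_nonexpansive_general
    (B : BDiagram) (T : B.PathSpace ≃ B.PathSpace)
    (hproper : B.ProperlyOrdered) (hT : B.IsVershik T)
    (hsne : B.SNE) :
    B.Nonexpansive T := by
  intro k hk
  obtain ⟨x, x', hne, -, hlevels⟩ := hsne k hk
  refine ⟨x, x', hne, fun m i hik => ?_⟩
  have hfar : ∀ᶠ n in Filter.atTop, B.KEquivAt k n x x' :=
    Filter.eventually_atTop.2 ⟨k + 1, fun n hn => hlevels n hn⟩
  obtain ⟨n, hn, hkn⟩ :=
    ((B.eventually_kEquivAt_iterZ hproper hT m hfar).and (Filter.eventually_ge_atTop k)).exists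
  exact hn.apply_eq_of_lt hkn hik

/-- Every standard nonexpansive simple, properly ordered
Bratteli–Vershik system is nonexpansive. -/
theorem sne_implies_nonexpansive
    (B : BDiagram) (T : B.PathSpace ≃ B.PathSpace)
    (hproper : B.ProperlyOrdered) (hsimple : B.Simple) (hT : B.IsVershik T)
    (hsne : B.SNE) :
    B.Nonexpansive T :=
  sne_implies_nonexpansive_general B T hproper hT hsne
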